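/- arXiv:1101.4430 — 2 statements merged into one kernel-verified Lean document; each statement's English description precedes it below -/
import Mathlib

section
/- Progress for unannotated Tvec: if Γ ⊢ a : φ and dom(Γ) ∩ FV(a) = ∅, then either a is a value or there exists a' with a ⇝ a'. Values are defined by v ::= λx.a | 0 | (S v) | nil | (cons v v') | join. -/
set_option autoImplicit true

/-- Unannotated Tvec terms. -/
inductive Tm : Type
  | var (x : String)
  | app (a b : Tm)
  | lam (x : String) (a : Tm)
  | zero
  | succ (a : Tm)
  | rnat (a a' a'' : Tm)
  | nil
  | cons (a a' : Tm)
  | rvec (a a' a'' : Tm)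
  | join
  deriving DecidableEq

/-- Tvec types. -/
inductive Ty : Type
  | nat
  | vec (phi : Ty) (l : Tm)
  | pi (x : String) (phi' phi : Ty)
  | all (x : String) (phi' phi : Ty)
  | eq (a a' : Tm)
  deriving DecidableEq

/-- Substitution [b/x] on terms. -/
def subst (b : Tm) (x : String) : Tm → Tm
  | .var y => if y = x then b else .var y
  | .app t u => .app (subst b x t) (subst b x u)
  | .lam y t => if y = x then .lam y t else .lam y (subst b x t)
  | .zero => .zero
  | .succ t => .succ (subst b x t)
  | .rnat t u v => .rnat (subst b x t) (subst b x u) (subst b x v)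
  | .nil => .nil
  | .cons t u => .cons (subst b x t) (subst b x u)
  | .rvec t u v => .rvec (subst b x t) (subst b x u) (subst b x v)
  | .join => .join

/-- Substitution [b/x] on types. -/
def substTy (b : Tm) (x : String) : Ty → Ty
  | .nat => .nat
  | .vec phi l => .vec (substTy b x phi) (subst b x l)
  | .pi y phi' phi =>
      if y = x then .pi y (substTy b x phi') phi
      else .pi y (substTy b x phi') (substTy b x phi)
  | .all y phi' phi =>
      if y = x then .all y (substTy b x phi') phi
      else .all y (substTy b x phi') (substTy b x phi)
  | .eq a a' => .eq (subst b x a) (subst b x a')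

/-- Simultaneous substitution [b/y, c/x] on terms (y, x assumed distinct). -/
def subst2 (b : Tm) (y : String) (c : Tm) (x : String) : Tm → Tm
  | .var z => if z = y then b else if z = x then c else .var z
  | .app t u => .app (subst2 b y c x t) (subst2 b y c x u)
  | .lam z t =>
      if z = y then (if z = x then .lam z t else .lam z (subst c x t))
      else if z = x then .lam z (subst b y t)
      else .lam z (subst2 b y c x t)
  | .zero => .zero
  | .succ t => .succ (subst2 b y c x t)
  | .rnat t u v => .rnat (subst2 b y c x t) (subst2 b y c x u) (subst2 b y c x v)
  | .nil => .nil
  | .cons t u => .cons (subst2 b y c x t) (subst2 b y c x u)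
  | .rvec t u v => .rvec (subst2 b y c x t) (subst2 b y c x u) (subst2 b y c x v)
  | .join => .join

/-- Simultaneous substitution [b/y, c/x] on types. -/
def subst2Ty (b : Tm) (y : String) (c : Tm) (x : String) : Ty → Ty
  | .nat => .nat
  | .vec phi l => .vec (subst2Ty b y c x phi) (subst2 b y c x l)
  | .pi z phi' phi =>
      .pi z (subst2Ty b y c x phi')
        (if z = y then (if z = x then phi else substTy c x phi)
         else if z = x then substTy b y phi
         else subst2Ty b y c x phi)
  | .all z phi' phi =>
      .all z (subst2Ty b y c x phi')
        (if z = y then (if z = x then phi else substTy c x phi)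
         else if z = x then substTy b y phi
         else subst2Ty b y c x phi)
  | .eq a a' => .eq (subst2 b y c x a) (subst2 b y c x a')

/-- Free variables of a term. -/
def FV : Tm → Finset String
  | .var x => {x}
  | .app t u => FV t ∪ FV u
  | .lam y t => FV t \ {y}
  | .zero => ∅
  | .succ t => FV t
  | .rnat t u v => FV t ∪ FV u ∪ FV v
  | .nil => ∅
  | .cons t u => FV t ∪ FV u
  | .rvec t u v => FV t ∪ FV u ∪ FV v
  | .join => ∅

/-- Free variables of a type. -/
def FVTy : Ty → Finset String
  | .nat => ∅
  | .vec phi l => FVTy phi ∪ FV l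
  | .pi y phi' phi => FVTy phi' ∪ (FVTy phi \ {y})
  | .all y phi' phi => FVTy phi' ∪ (FVTy phi \ {y})
  | .eq a a' => FV a ∪ FV a'

/-- Full reduction: compatible closure of the reduction rules of Figure 1. -/
inductive Step : Tm → Tm → Prop
  | beta : Step (.app (.lam x a) b) (subst b x a)
  | rnatZero : Step (.rnat a a' .zero) a
  | rnatSucc : Step (.rnat a a' (.succ b)) (.app (.app a' b) (.rnat a a' b))
  | rvecNil : Step (.rvec a a' .nil) a
  | rvecCons : Step (.rvec a a' (.cons b c)) (.app (.app (.app a' b) c) (.rvec a a' c))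
  | appLeft : Step a a' → Step (.app a b) (.app a' b)
  | appRight : Step b b' → Step (.app a b) (.app a b')
  | lamBody : Step a a' → Step (.lam x a) (.lam x a')
  | succArg : Step a a' → Step (.succ a) (.succ a')
  | consLeft : Step a a' → Step (.cons a b) (.cons a' b)
  | consRight : Step b b' → Step (.cons a b) (.cons a b')
  | rnat1 : Step a a₂ → Step (.rnat a b c) (.rnat a₂ b c)
  | rnat2 : Step b b₂ → Step (.rnat a b c) (.rnat a b₂ c)
  | rnat3 : Step c c₂ → Step (.rnat a b c) (.rnat a b c₂)
  | rvec1 : Step a a₂ → Step (.rvec a b c) (.rvec a₂ b c)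
  | rvec2 : Step b b₂ → Step (.rvec a b c) (.rvec a b₂ c)
  | rvec3 : Step c c₂ → Step (.rvec a b c) (.rvec a b c₂)

def Steps : Tm → Tm → Prop := Relation.ReflTransGen Step

/-- Joinability a ↓ a'. -/
def Joinable (a a' : Tm) : Prop := ∃ c, Steps a c ∧ Steps a' c

/-- Typing contexts (most recent binding first). -/
abbrev Ctx := List (String × Ty)

def dom (Γ : Ctx) : Finset String := (Γ.map Prod.fst).toFinset

def lookupC (Γ : Ctx) (x : String) : Option Ty :=
  (Γ.find? (fun p => p.1 == x)).map Prod.snd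

/-- Γ Ok: each declared type mentions only previously declared variables. -/
def Ok : Ctx → Prop
  | [] => True
  | (x, phi) :: Γ => x ∉ dom Γ ∧ FVTy phi ⊆ dom Γ ∧ Ok Γ

/-- Type assignment for unannotated Tvec (Figure 2). -/
inductive Typing : Ctx → Tm → Ty → Prop
  | var : lookupC Γ x = some phi → Ok Γ → Typing Γ (.var x) phi
  | join : Joinable a a' → Ok Γ → Typing Γ .join (.eq a a')
  | conv : Typing Γ p (.eq a' a'') → Typing Γ a (substTy a' x phi) → x ∉ dom Γ →
      Typing Γ a (substTy a'' x phi)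
  | specAbs : Typing ((x, phi') :: Γ) a phi → x ∉ FV a → Typing Γ a (.all x phi' phi)
  | specApp : Typing Γ a (.all x phi' phi) → Typing Γ a' phi' → Typing Γ a (substTy a' x phi)
  | abs : Typing ((x, phi') :: Γ) a phi → Typing Γ (.lam x a) (.pi x phi' phi)
  | app : Typing Γ a (.pi x phi' phi) → Typing Γ b phi' → Typing Γ (.app a b) (substTy b x phi)
  | zero : Ok Γ → Typing Γ .zero .nat
  | succ : Typing Γ a .nat → Typing Γ (.succ a) .nat
  | nil : Ok Γ → Typing Γ .nil (.vec phi .zero)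
  | cons : Typing Γ a phi → Typing Γ a' (.vec phi l) →
      Typing Γ (.cons a a') (.vec phi (.succ l))
  | rnat : x ∉ dom Γ → Typing Γ a'' .nat → Typing Γ a (substTy .zero x phi) →
      Typing Γ a' (.pi y .nat (.pi u (substTy (.var y) x phi)
        (substTy (.succ (.var y)) x phi))) →
      Typing Γ (.rnat a a' a'') (substTy a'' x phi)
  | rvec : x ∉ dom Γ → Typing Γ a'' (.vec phi' l) →
      Typing Γ a (subst2Ty .zero y .nil x phi) →
      Typing Γ a' (.pi z phi' (.all lv .nat (.pi v (.vec phi' (.var lv)) (.pi u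
        (subst2Ty (.var lv) y (.var v) x phi)
        (subst2Ty (.succ (.var lv)) y (.cons (.var z) (.var v)) x phi))))) →
      Typing Γ (.rvec a a' a'') (subst2Ty l y a'' x phi)

/-- Values. -/
inductive IsValue : Tm → Prop
  | lam : IsValue (.lam x a)
  | zero : IsValue .zero
  | succ : IsValue v → IsValue (.succ v)
  | nil : IsValue .nil
  | cons : IsValue v → IsValue v' → IsValue (.cons v v')
  | join : IsValue .join

/-!
Induction on the typing derivation. Conversion and the `∀`-rules leave the term unchanged; the
disjointness hypothesis excludes variables, and survives `∀`-introduction thanks to its side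
condition `x ∉ FV a`. An elimination form whose principal argument is a value reduces by canonical
forms: no typing rule changes the outer type former below the leading `∀`s other than by
substitution, so that former is determined by the introduction form of the value.
-/

inductive TyShape : Type
  | nat | vec | pi | eq

def Ty.shape : Ty → TyShape
  | .nat => .nat
  | .vec _ _ => .vec
  | .pi _ _ _ => .pi
  | .all _ _ phi => phi.shape
  | .eq _ _ => .eq

def Tm.introShape? : Tm → Option TyShape
  | .lam _ _ => some .pi
  | .zero | .succ _ => some .nat
  | .nil | .cons _ _ => some .vec
  | .join => some .eq
  | _ => none

@[simp]
theorem Ty.shape_substTy (b : Tm) (x : String) (phi : Ty) : (substTy b x phi).shape = phi.shape := by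
  induction phi with
  | all y _ _ _ ih => unfold substTy; split <;> simp only [Ty.shape, ih]
  | pi => unfold substTy; split <;> rfl
  | _ => rfl

theorem Typing.shape_eq_of_introShape? {Γ : Ctx} {a : Tm} {phi : Ty} (h : Typing Γ a phi)
    {k : TyShape} (hk : a.introShape? = some k) : phi.shape = k := by
  induction h <;> simp_all [Tm.introShape?, Ty.shape]

section CanonicalForms

variable {Γ : Ctx} {v : Tm} {phi : Ty}

theorem IsValue.exists_eq_lam (hv : IsValue v) (h : Typing Γ v phi) (hphi : phi.shape = .pi) :
    ∃ x b, v = .lam x b := by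
  cases hv with
  | lam => exact ⟨_, _, rfl⟩
  | _ => nomatch hphi.symm.trans (h.shape_eq_of_introShape? rfl)

theorem IsValue.eq_zero_or_exists_eq_succ (hv : IsValue v) (h : Typing Γ v phi)
    (hphi : phi.shape = .nat) : v = .zero ∨ ∃ w, v = .succ w := by
  cases hv with
  | zero => exact .inl rfl
  | succ => exact .inr ⟨_, rfl⟩
  | _ => nomatch hphi.symm.trans (h.shape_eq_of_introShape? rfl)

theorem IsValue.eq_nil_or_exists_eq_cons (hv : IsValue v) (h : Typing Γ v phi)
    (hphi : phi.shape = .vec) : v = .nil ∨ ∃ w w', v = .cons w w' := by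
  cases hv with
  | nil => exact .inl rfl
  | cons => exact .inr ⟨_, _, rfl⟩
  | _ => nomatch hphi.symm.trans (h.shape_eq_of_introShape? rfl)

end CanonicalForms

theorem dom_cons (p : String × Ty) (Γ : Ctx) : dom (p :: Γ) = insert p.1 (dom Γ) := by
  simp [dom]

theorem mem_dom_of_lookupC_eq_some {Γ : Ctx} {x : String} {phi : Ty}
    (h : lookupC Γ x = some phi) : x ∈ dom Γ := by
  induction Γ with
  | nil => simp [lookupC] at h
  | cons p Γ ih =>
    rw [dom_cons, Finset.mem_insert]
    by_cases hp : p.1 = x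
    · exact .inl hp.symm
    · refine .inr (ih ?_)
      simpa [lookupC, List.find?_cons, hp] using h

theorem Typing.isValue_or_exists_step {Γ : Ctx} {a : Tm} {phi : Ty} (h : Typing Γ a phi)
    (hfv : Disjoint (dom Γ) (FV a)) : IsValue a ∨ ∃ a', Step a a' := by
  induction h with
  | var hx =>
    exact absurd (Finset.mem_singleton_self _)
      (Finset.disjoint_left.1 hfv (mem_dom_of_lookupC_eq_some hx))
  | join => exact .inl .join
  | abs => exact .inl .lam
  | zero => exact .inl .zero
  | nil => exact .inl .nil
  | conv _ _ _ _ ih | specApp _ _ ih _ => exact ih hfv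
  | specAbs _ hx ih => exact ih (by rw [dom_cons]; exact Finset.disjoint_insert_left.2 ⟨hx, hfv⟩)
  | app ha _ iha _ =>
    rcases iha (Finset.disjoint_union_right.1 hfv).1 with hv | ⟨_, hs⟩
    · obtain ⟨x, b, rfl⟩ := hv.exists_eq_lam ha rfl
      exact .inr ⟨_, .beta⟩
    · exact .inr ⟨_, .appLeft hs⟩
  | succ _ ih => exact (ih hfv).imp .succ fun ⟨_, hs⟩ => ⟨_, .succArg hs⟩
  | cons _ _ ih ih' =>
    rcases ih (Finset.disjoint_union_right.1 hfv).1 with hv | ⟨_, hs⟩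
    · exact (ih' (Finset.disjoint_union_right.1 hfv).2).imp (.cons hv)
        fun ⟨_, hs⟩ => ⟨_, .consRight hs⟩
    · exact .inr ⟨_, .consLeft hs⟩
  | rnat _ hn _ _ ih =>
    rcases ih (Finset.disjoint_union_right.1 hfv).2 with hv | ⟨_, hs⟩
    · rcases hv.eq_zero_or_exists_eq_succ hn rfl with rfl | ⟨_, rfl⟩
      exacts [.inr ⟨_, .rnatZero⟩, .inr ⟨_, .rnatSucc⟩]
    · exact .inr ⟨_, .rnat3 hs⟩
  | rvec _ hl _ _ ih =>
    rcases ih (Finset.disjoint_union_right.1 hfv).2 with hv | ⟨_, hs⟩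
    · rcases hv.eq_nil_or_exists_eq_cons hl rfl with rfl | ⟨_, _, rfl⟩
      exacts [.inr ⟨_, .rvecNil⟩, .inr ⟨_, .rvecCons⟩]
    · exact .inr ⟨_, .rvec3 hs⟩

/-- Progress for unannotated Tvec. -/
theorem progress (Γ : Ctx) (a : Tm) (phi : Ty)
    (h : Typing Γ a phi) (hfv : dom Γ ∩ FV a = ∅) :
    IsValue a ∨ ∃ a', Step a a' :=
  h.isValue_or_exists_step (Finset.disjoint_iff_inter_eq_empty.2 hfv)
end

section
/- Canonical Forms for unannotated Tvec: suppose dom(Γ) ∩ FV(v) = ∅ where v is a value. Then: (1) if Γ ⊢ v : ∀x⃗.nat then v = 0 or v = S v'; (2) if Γ ⊢ v : ∀x⃗.⟨vec φ l⟩ then v = nil or v = cons v' v''; (3) if Γ ⊢ v : ∀x⃗.Πx:φ'.φ then v = λx.a; (4) if Γ ⊢ v : ∀x⃗.(a₁ = a₂) then v = join. Here ∀x⃗.φ denotes a (possibly empty) prefix of ∀-quantifiers. -/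
set_option autoImplicit true

/-- ∀x⃗.φ : a (possibly empty) prefix of ∀-quantifiers in front of φ. -/
def mkAll : List (String × Ty) → Ty → Ty
  | [], phi => phi
  | (x, psi) :: xs, phi => .all x psi (mkAll xs phi)


/-! Conversion and the specialization rules `specAbs`/`specApp` change a type only below its
head constructor once leading `∀`s are ignored, while every other rule either builds a value whose
shape matches that head or cannot type a value at all. So the head of any type of a value
determines the value's outermost constructor. -/

inductive TyHead
  | nat
  | vec
  | pi
  | eq

def Ty.head : Ty → TyHead
  | .nat => .nat
  | .vec _ _ => .vec
  | .pi _ _ _ => .pi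
  | .all _ _ phi => phi.head
  | .eq _ _ => .eq

@[simp]
lemma Ty.head_substTy (b : Tm) (x : String) (phi : Ty) : (substTy b x phi).head = phi.head := by
  induction phi with
  | all y _ _ _ ih => unfold substTy; split <;> simp [Ty.head, ih]
  | pi => unfold substTy; split <;> rfl
  | _ => rfl

@[simp]
lemma Ty.head_mkAll (xs : List (String × Ty)) (phi : Ty) : (mkAll xs phi).head = phi.head := by
  induction xs with
  | nil => rfl
  | cons p xs ih => exact ih

inductive IsCanonical : TyHead → Tm → Prop
  | zero : IsCanonical .nat .zero
  | succ (v : Tm) : IsCanonical .nat (.succ v)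
  | nil : IsCanonical .vec .nil
  | cons (v v' : Tm) : IsCanonical .vec (.cons v v')
  | lam (x : String) (a : Tm) : IsCanonical .pi (.lam x a)
  | join : IsCanonical .eq .join

theorem Typing.isCanonical {Γ : Ctx} {v : Tm} {phi : Ty} (h : Typing Γ v phi) (hv : IsValue v) :
    IsCanonical phi.head v := by
  induction h with
  | var | app | rnat | rvec => cases hv
  | conv _ _ _ _ ih => simpa using ih hv
  | specAbs _ _ ih => exact ih hv
  | specApp _ _ ih => simpa [Ty.head] using ih hv
  | join => exact .join
  | abs => exact .lam _ _
  | zero => exact .zero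
  | succ => exact .succ _
  | nil => exact .nil
  | cons => exact .cons _ _

theorem canonical_forms_general (Γ : Ctx) (v : Tm)
    (hv : IsValue v) :
    (∀ xs, Typing Γ v (mkAll xs .nat) → v = .zero ∨ ∃ v', v = .succ v') ∧
    (∀ xs phi l, Typing Γ v (mkAll xs (.vec phi l)) →
        v = .nil ∨ ∃ v' v'', v = .cons v' v'') ∧
    (∀ xs x phi' phi, Typing Γ v (mkAll xs (.pi x phi' phi)) → ∃ y a, v = .lam y a) ∧
    (∀ xs a₁ a₂, Typing Γ v (mkAll xs (.eq a₁ a₂)) → v = .join) := by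
  refine ⟨fun xs h => ?_, fun xs phi l h => ?_, fun xs x phi' phi h => ?_, fun xs a₁ a₂ h => ?_⟩
  all_goals
    have hcan := h.isCanonical hv
    simp only [Ty.head_mkAll, Ty.head] at hcan
    cases hcan <;> simp

/-- Canonical Forms for unannotated Tvec. -/
theorem canonical_forms (Γ : Ctx) (v : Tm)
    (hv : IsValue v) (hdisj : dom Γ ∩ FV v = ∅) :
    (∀ xs, Typing Γ v (mkAll xs .nat) → v = .zero ∨ ∃ v', v = .succ v') ∧
    (∀ xs phi l, Typing Γ v (mkAll xs (.vec phi l)) →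
        v = .nil ∨ ∃ v' v'', v = .cons v' v'') ∧
    (∀ xs x phi' phi, Typing Γ v (mkAll xs (.pi x phi' phi)) → ∃ y a, v = .lam y a) ∧
    (∀ xs a₁ a₂, Typing Γ v (mkAll xs (.eq a₁ a₂)) → v = .join) :=
  canonical_forms_general Γ v hv
end
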